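/- For the general AdaBB iteration, the Lyapunov function Υ_k is monotone: for all k ≥ 1, Υ_{k+1} ≤ Υ_k − 2w_{k−1}·(f(x^{k−1}) − f_*) ≤ Υ_k. -/

import Mathlib

open scoped RealInnerProductSpace
open Finset Filter

noncomputable section

/-- The general AdaBB iteration (Algorithm 2 of the paper) for a convex differentiable
function `f : ℝⁿ → ℝ` that attains its minimum.  `f'` is the gradient of `f`,
`x` the iterates, `α` the stepsizes, `θ` the stepsize ratios and `lam` the short BB stepsizes. -/
structure AdaBB (n : ℕ) where
  f : EuclideanSpace ℝ (Fin n) → ℝ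
  f' : EuclideanSpace ℝ (Fin n) → EuclideanSpace ℝ (Fin n)
  x : ℕ → EuclideanSpace ℝ (Fin n)
  α : ℕ → ℝ
  θ : ℕ → ℝ
  lam : ℕ → ℝ
  hconv : ConvexOn ℝ Set.univ f
  hgrad : ∀ y, HasGradientAt f (f' y) y
  hmin : ∃ z, ∀ y, f z ≤ f y
  hα0 : 0 < α 0
  hθ0 : 0 ≤ θ 0
  hx1 : x 1 = x 0 - α 0 • f' (x 0)
  hne : ∀ k, f' (x (k + 1)) ≠ f' (x k)
  hlam : ∀ k, lam (k + 1) =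
    ⟪f' (x (k + 1)) - f' (x k), x (k + 1) - x k⟫ / ‖f' (x (k + 1)) - f' (x k)‖ ^ 2
  hlampos : ∀ k, 0 < lam (k + 1)
  hcase1 : ∀ k, α k ≤ lam (k + 1) →
    α (k + 1) = Real.sqrt (1 + θ k) * α k ∧ θ (k + 1) = α (k + 1) / α k
  hcase2 : ∀ k, α k / 2 < lam (k + 1) → lam (k + 1) < α k →
    (α (k + 1) = min (Real.sqrt (lam (k + 1) / (2 * (α k - lam (k + 1)))))
        (Real.sqrt ((1 + θ k) * lam (k + 1) / (2 * lam (k + 1) - α k))) * α k ∨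
      α (k + 1) = lam (k + 1)) ∧
    θ (k + 1) = 2 * α (k + 1) / α k - α (k + 1) / lam (k + 1)
  hcase3 : ∀ k, lam (k + 1) ≤ α k / 2 →
    (α (k + 1) = Real.sqrt (α k / (2 * (α k - lam (k + 1)))) * lam (k + 1) ∨
      α (k + 1) = lam (k + 1) / Real.sqrt 2) ∧
    θ (k + 1) = α (k + 1) / α k
  hstep : ∀ k, x (k + 2) = x (k + 1) - α (k + 1) • f' (x (k + 1))

namespace AdaBB

variable {n : ℕ}

/-- `M_k` (for `k ≥ 1`). -/
def M (S : AdaBB n) (k : ℕ) : ℝ :=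
  if S.α (k - 1) ≤ S.lam k then 0
  else if S.α (k - 1) / 2 < S.lam k then
    S.α k ^ 2 / (S.lam k * S.α (k - 1)) - S.α k ^ 2 / S.α (k - 1) ^ 2
  else S.α k ^ 2 / S.lam k ^ 2 - S.α k ^ 2 / (S.α (k - 1) * S.lam k)

/-- `P_k` for `k ≥ 1`. -/
def Paux (S : AdaBB n) (k : ℕ) : ℝ :=
  if S.α (k - 1) ≤ S.lam k then S.α k ^ 2 / S.α (k - 1)
  else if S.α (k - 1) / 2 < S.lam k then
    2 * S.α k ^ 2 / S.α (k - 1) - S.α k ^ 2 / S.lam k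
  else S.α k ^ 2 / S.α (k - 1)

/-- `P_k`, with the convention `P_0 = P_1 - α_0`. -/
def P (S : AdaBB n) (k : ℕ) : ℝ :=
  if k = 0 then S.Paux 1 - S.α 0 else S.Paux k

/-- `w_k = α_k + P_k - P_{k+1}`. -/
def w (S : AdaBB n) (k : ℕ) : ℝ := S.α k + S.P k - S.P (k + 1)

/-- The Lyapunov function `Υ_k` (for `k ≥ 1`), relative to a minimizer `xs` of `f`. -/
def Upsilon (S : AdaBB n) (xs : EuclideanSpace ℝ (Fin n)) (k : ℕ) : ℝ :=
  ‖S.x k - xs‖ ^ 2 + 2 * S.M k * ‖S.x k - S.x (k - 1)‖ ^ 2 +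
    (2 * S.α (k - 1) + 2 * S.P (k - 1)) * (S.f (S.x (k - 1)) - S.f xs)

end AdaBB

end

/-!
Expanding `‖x^{k+1} - x*‖²` along the gradient step and using the gradient inequality of `f`
at `x*` and at `x^{k-1}` reduces the claim to `M_{k+1} ≤ 1/2` and to
`α_k² ‖∇f(x^k)‖² ≤ P_k α_{k-1} ⟪∇f(x^k), ∇f(x^{k-1})⟫ + M_k α_{k-1}² ‖∇f(x^{k-1})‖²`.
With `d = ∇f(x^k) - ∇f(x^{k-1})`, the definition of `λ_k` reads
`λ_k ‖d‖² = α_{k-1} ⟪-d, ∇f(x^{k-1})⟫`; hence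
`α_{k-1} (‖∇f(x^k)‖² - ⟪∇f(x^k), ∇f(x^{k-1})⟫) = (α_{k-1} - λ_k) ‖d‖²` and, by Cauchy–Schwarz,
`λ_k ‖d‖ ≤ α_{k-1} ‖∇f(x^{k-1})‖`, which give the inequality in each case of the stepsize rule
(with equality in Case ii). Finally `w_k ≥ 0` because `P_k = θ_k α_k` and
`P_{k+1} ≤ (1 + θ_k) α_k`.
-/

theorem sq_le_mul_sq_of_le_sqrt_mul {a A b : ℝ} (ha : 0 ≤ a) (hA : 0 ≤ A) (h : a ≤ √A * b) :
    a ^ 2 ≤ A * b ^ 2 := by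
  simpa [mul_pow, Real.sq_sqrt hA] using pow_le_pow_left₀ ha h 2

section

variable {E : Type*} [NormedAddCommGroup E] [InnerProductSpace ℝ E]

theorem ConvexOn.sub_le_inner_of_hasGradientAt [CompleteSpace E] {f : E → ℝ}
    (hf : ConvexOn ℝ Set.univ f) {g x : E} (hg : HasGradientAt f g x) (y : E) :
    f x - f y ≤ ⟪g, x - y⟫ := by
  have hline : HasDerivAt (f ∘ AffineMap.lineMap x y) ⟪g, y - x⟫ (0 : ℝ) := by
    have hg' : HasFDerivAt f (InnerProductSpace.toDual ℝ E g) (AffineMap.lineMap x y (0 : ℝ)) := by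
      simpa using hg.hasFDerivAt
    simpa using hg'.comp_hasDerivAt (0 : ℝ) AffineMap.hasDerivAt_lineMap
  have h := (hf.comp_affineMap (AffineMap.lineMap x y)).le_slope_of_hasDerivAt
    (Set.mem_univ 0) (Set.mem_univ 1) zero_lt_one hline
  simp only [slope_def_field, Function.comp_apply, AffineMap.lineMap_apply_zero,
    AffineMap.lineMap_apply_one, sub_zero, div_one] at h
  rw [← neg_sub y x, inner_neg_right]
  linarith

-- `lam * ‖g₁ - g₀‖ ^ 2 = β * ⟪g₀ - g₁, g₀⟫` says that `lam` is the short Barzilai–Borwein stepsize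
-- of the gradient step `x₁ = x₀ - β • g₀` with gradients `g₀`, `g₁`.
section BarzilaiBorwein
variable {g₀ g₁ : E} {β lam : ℝ}

theorem bb_norm_sq_sub_inner (hbb : lam * ‖g₁ - g₀‖ ^ 2 = β * ⟪g₀ - g₁, g₀⟫) :
    β * (‖g₁‖ ^ 2 - ⟪g₁, g₀⟫) = (β - lam) * ‖g₁ - g₀‖ ^ 2 := by
  rw [norm_sub_sq_real, inner_sub_left, real_inner_self_eq_norm_sq] at hbb
  rw [norm_sub_sq_real]
  linear_combination hbb

theorem bb_mul_norm_sub_le (hβ : 0 ≤ β) (hbb : lam * ‖g₁ - g₀‖ ^ 2 = β * ⟪g₀ - g₁, g₀⟫) :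
    lam * ‖g₁ - g₀‖ ≤ β * ‖g₀‖ := by
  rcases (norm_nonneg (g₁ - g₀)).eq_or_lt with hd | hd
  · rw [← hd, mul_zero]; positivity
  have hcs : ⟪g₀ - g₁, g₀⟫ ≤ ‖g₁ - g₀‖ * ‖g₀‖ := by
    rw [← norm_neg (g₁ - g₀), neg_sub]; exact real_inner_le_norm _ _
  have : lam * ‖g₁ - g₀‖ * ‖g₁ - g₀‖ ≤ β * ‖g₀‖ * ‖g₁ - g₀‖ := by
    calc lam * ‖g₁ - g₀‖ * ‖g₁ - g₀‖ = β * ⟪g₀ - g₁, g₀⟫ := by rw [← hbb]; ring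
      _ ≤ β * (‖g₁ - g₀‖ * ‖g₀‖) := mul_le_mul_of_nonneg_left hcs hβ
      _ = β * ‖g₀‖ * ‖g₁ - g₀‖ := by ring
  exact le_of_mul_le_mul_right this hd

theorem bb_norm_sq_le_inner (hβ : 0 < β) (hlam : β ≤ lam)
    (hbb : lam * ‖g₁ - g₀‖ ^ 2 = β * ⟪g₀ - g₁, g₀⟫) : ‖g₁‖ ^ 2 ≤ ⟪g₁, g₀⟫ := by
  have h : β * (‖g₁‖ ^ 2 - ⟪g₁, g₀⟫) ≤ 0 := by
    rw [bb_norm_sq_sub_inner hbb]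
    exact mul_nonpos_of_nonpos_of_nonneg (by linarith) (sq_nonneg _)
  exact sub_nonpos.1 (nonpos_of_mul_nonpos_right h hβ)

theorem bb_mul_norm_sq_eq (hbb : lam * ‖g₁ - g₀‖ ^ 2 = β * ⟪g₀ - g₁, g₀⟫) :
    lam * ‖g₁‖ ^ 2 = (2 * lam - β) * ⟪g₁, g₀⟫ + (β - lam) * ‖g₀‖ ^ 2 := by
  rw [norm_sub_sq_real, inner_sub_left, real_inner_self_eq_norm_sq] at hbb
  linear_combination hbb

theorem bb_sq_mul_norm_sq_sub_inner_le (hβ : 0 < β) (hlam : 0 ≤ lam) (hlamβ : lam ≤ β)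
    (hbb : lam * ‖g₁ - g₀‖ ^ 2 = β * ⟪g₀ - g₁, g₀⟫) :
    lam ^ 2 * (‖g₁‖ ^ 2 - ⟪g₁, g₀⟫) ≤ β * (β - lam) * ‖g₀‖ ^ 2 := by
  have hsq : (lam * ‖g₁ - g₀‖) ^ 2 ≤ (β * ‖g₀‖) ^ 2 :=
    pow_le_pow_left₀ (by positivity) (bb_mul_norm_sub_le hβ.le hbb) 2
  have h := bb_norm_sq_sub_inner hbb
  refine le_of_mul_le_mul_left ?_ hβ
  calc β * (lam ^ 2 * (‖g₁‖ ^ 2 - ⟪g₁, g₀⟫)) = (β - lam) * (lam * ‖g₁ - g₀‖) ^ 2 := by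
        rw [mul_left_comm, h]; ring
    _ ≤ (β - lam) * (β * ‖g₀‖) ^ 2 := mul_le_mul_of_nonneg_left hsq (by linarith)
    _ = β * (β * (β - lam) * ‖g₀‖ ^ 2) := by ring

end BarzilaiBorwein

end

namespace AdaBB

variable {n : ℕ} (S : AdaBB n)

theorem x_succ : ∀ k, S.x (k + 1) = S.x k - S.α k • S.f' (S.x k)
  | 0 => S.hx1
  | k + 1 => S.hstep k

theorem x_succ_sub (k : ℕ) : S.x (k + 1) - S.x k = -(S.α k • S.f' (S.x k)) := by
  rw [S.x_succ k, sub_sub_cancel_left]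

theorem alpha_pos_and_theta_nonneg (k : ℕ) : 0 < S.α k ∧ 0 ≤ S.θ k := by
  induction k with
  | zero => exact ⟨S.hα0, S.hθ0⟩
  | succ k ih =>
    obtain ⟨hβ, hθ⟩ := ih
    have hlam := S.hlampos k
    rcases le_or_gt (S.α k) (S.lam (k + 1)) with h₁ | h₁
    · obtain ⟨hα, hθ'⟩ := S.hcase1 k h₁
      have hα' : 0 < S.α (k + 1) := hα ▸ mul_pos (Real.sqrt_pos.2 (by linarith)) hβ
      exact ⟨hα', hθ' ▸ (div_pos hα' hβ).le⟩
    rcases le_or_gt (S.lam (k + 1)) (S.α k / 2) with h₂ | h₂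
    · obtain ⟨hα, hθ'⟩ := S.hcase3 k h₂
      have hα' : 0 < S.α (k + 1) := by
        rcases hα with hα | hα <;> rw [hα]
        · exact mul_pos (Real.sqrt_pos.2 (div_pos hβ (by linarith))) hlam
        · positivity
      exact ⟨hα', hθ' ▸ (div_pos hα' hβ).le⟩
    · obtain ⟨hα, hθ'⟩ := S.hcase2 k h₂ h₁
      have hα' : 0 < S.α (k + 1) := by
        rcases hα with hα | hα <;> rw [hα]
        · refine mul_pos (lt_min ?_ ?_) hβ
          · exact Real.sqrt_pos.2 (div_pos hlam (by linarith))
          · exact Real.sqrt_pos.2 (div_pos (mul_pos (by linarith) hlam) (by linarith))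
        · exact hlam
      refine ⟨hα', hθ' ▸ ?_⟩
      rw [sub_nonneg, div_le_div_iff₀ hlam hβ]
      nlinarith

theorem alpha_pos (k : ℕ) : 0 < S.α k := (S.alpha_pos_and_theta_nonneg k).1

theorem theta_nonneg (k : ℕ) : 0 ≤ S.θ k := (S.alpha_pos_and_theta_nonneg k).2

theorem bb_relation (k : ℕ) :
    S.lam (k + 1) * ‖S.f' (S.x (k + 1)) - S.f' (S.x k)‖ ^ 2 =
      S.α k * ⟪S.f' (S.x k) - S.f' (S.x (k + 1)), S.f' (S.x k)⟫ := by
  have hne : ‖S.f' (S.x (k + 1)) - S.f' (S.x k)‖ ^ 2 ≠ 0 := by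
    simpa [sub_eq_zero] using S.hne k
  rw [S.hlam k, div_mul_cancel₀ _ hne, x_succ_sub, inner_neg_right, real_inner_smul_right,
    ← mul_neg, ← inner_neg_left, neg_sub]

theorem sq_alpha_succ_le_of_case2 {k : ℕ} (h₂ : S.α k / 2 < S.lam (k + 1))
    (h₁ : S.lam (k + 1) < S.α k) :
    2 * S.α (k + 1) ^ 2 * (S.α k - S.lam (k + 1)) ≤ S.lam (k + 1) * S.α k ^ 2 ∧
      S.α (k + 1) ^ 2 * (2 * S.lam (k + 1) - S.α k) ≤ (1 + S.θ k) * S.lam (k + 1) * S.α k ^ 2 := by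
  have hβ := S.alpha_pos k
  have hθ := S.theta_nonneg k
  have hlam := S.hlampos k
  rcases (S.hcase2 k h₂ h₁).1 with hα | hα
  · have hα' := (S.alpha_pos (k + 1)).le
    have hA := sq_le_mul_sq_of_le_sqrt_mul hα' (by positivity)
      (hα.trans_le (mul_le_mul_of_nonneg_right (min_le_left _ _) hβ.le))
    have hB := sq_le_mul_sq_of_le_sqrt_mul hα' (div_nonneg (by positivity) (by linarith))
      (hα.trans_le (mul_le_mul_of_nonneg_right (min_le_right _ _) hβ.le))
    rw [div_mul_eq_mul_div, le_div_iff₀ (by linarith)] at hA hB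
    constructor <;> linarith
  · rw [hα]
    constructor
    · nlinarith [sq_nonneg (S.α k - S.lam (k + 1))]
    · have hsum : 0 < 2 * S.lam (k + 1) + S.α k := by linarith
      nlinarith [mul_pos hlam (mul_pos (sub_pos.2 h₁) hsum),
        mul_nonneg hθ (mul_nonneg hlam.le (sq_nonneg (S.α k)))]

theorem sq_alpha_succ_le_of_case3 {k : ℕ} (h₂ : S.lam (k + 1) ≤ S.α k / 2) :
    2 * S.α (k + 1) ^ 2 * (S.α k - S.lam (k + 1)) ≤ S.lam (k + 1) ^ 2 * S.α k ∧
      S.α (k + 1) ^ 2 ≤ S.lam (k + 1) ^ 2 := by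
  have hβ := S.alpha_pos k
  have hlam := S.hlampos k
  rcases (S.hcase3 k h₂).1 with hα | hα
  · have hd : 0 < S.α k - S.lam (k + 1) := by linarith
    have hα2 : S.α (k + 1) ^ 2 * (2 * (S.α k - S.lam (k + 1))) = S.α k * S.lam (k + 1) ^ 2 := by
      rw [hα, mul_pow, Real.sq_sqrt (div_nonneg hβ.le (by linarith))]
      field_simp
    constructor <;> nlinarith
  · have hα2 : S.α (k + 1) ^ 2 = S.lam (k + 1) ^ 2 / 2 := by
      rw [hα, div_pow, Real.sq_sqrt zero_le_two]
    rw [hα2]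
    constructor <;> nlinarith

theorem P_succ (k : ℕ) : S.P (k + 1) = S.Paux (k + 1) := if_neg k.succ_ne_zero

theorem P_succ_eq_theta_mul_alpha (k : ℕ) : S.P (k + 1) = S.θ (k + 1) * S.α (k + 1) := by
  have hβ := (S.alpha_pos k).ne'
  simp only [P_succ, Paux, Nat.add_sub_cancel]
  split_ifs with h₁ h₂
  · rw [(S.hcase1 k h₁).2]; field_simp
  · rw [(S.hcase2 k h₂ (lt_of_not_ge h₁)).2]; ring
  · rw [(S.hcase3 k (le_of_not_gt h₂)).2]; field_simp

theorem P_succ_nonneg (k : ℕ) : 0 ≤ S.P (k + 1) := by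
  rw [P_succ_eq_theta_mul_alpha]
  exact mul_nonneg (S.theta_nonneg _) (S.alpha_pos _).le

theorem M_succ_le_half (k : ℕ) : S.M (k + 1) ≤ 1 / 2 := by
  have hβ := S.alpha_pos k
  have hlam := S.hlampos k
  simp only [M, Nat.add_sub_cancel]
  split_ifs with h₁ h₂
  · norm_num
  · have h := (S.sq_alpha_succ_le_of_case2 h₂ (lt_of_not_ge h₁)).1
    rw [div_sub_div _ _ (by positivity) (by positivity), div_le_iff₀ (by positivity)]
    nlinarith
  · have h := (S.sq_alpha_succ_le_of_case3 (le_of_not_gt h₂)).1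
    rw [div_sub_div _ _ (by positivity) (by positivity), div_le_iff₀ (by positivity)]
    nlinarith

theorem P_succ_le (k : ℕ) : S.P (k + 1) ≤ (1 + S.θ k) * S.α k := by
  have hβ := S.alpha_pos k
  have hlam := S.hlampos k
  simp only [P_succ, Paux, Nat.add_sub_cancel]
  split_ifs with h₁ h₂
  · rw [(S.hcase1 k h₁).1, mul_pow, Real.sq_sqrt (by linarith [S.theta_nonneg k])]
    exact le_of_eq (by field_simp)
  · have h := (S.sq_alpha_succ_le_of_case2 h₂ (lt_of_not_ge h₁)).2
    rw [div_sub_div _ _ (by positivity) (by positivity), div_le_iff₀ (by positivity)]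
    nlinarith
  · have h := (S.sq_alpha_succ_le_of_case3 (le_of_not_gt h₂)).2
    have hlamβ : S.lam (k + 1) ≤ S.α k := by linarith
    rw [div_le_iff₀ hβ]
    nlinarith [mul_nonneg (S.theta_nonneg k) (sq_nonneg (S.α k)),
      mul_le_mul hlamβ hlamβ hlam.le hβ.le]

theorem w_nonneg (k : ℕ) : 0 ≤ S.w k := by
  cases k with
  | zero => simp [w, P]
  | succ k =>
    have := S.P_succ_le (k + 1)
    rw [w, P_succ_eq_theta_mul_alpha]
    linarith

theorem sq_alpha_succ_mul_norm_sq_le (k : ℕ) :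
    S.α (k + 1) ^ 2 * ‖S.f' (S.x (k + 1))‖ ^ 2 ≤
      S.P (k + 1) * (S.α k * ⟪S.f' (S.x (k + 1)), S.f' (S.x k)⟫) +
        S.M (k + 1) * (S.α k ^ 2 * ‖S.f' (S.x k)‖ ^ 2) := by
  have hβ := S.alpha_pos k
  have hlam := S.hlampos k
  have hbb := S.bb_relation k
  simp only [P_succ, M, Paux, Nat.add_sub_cancel]
  split_ifs with h₁ h₂
  · field_simp
    linear_combination S.α (k + 1) ^ 2 * bb_norm_sq_le_inner hβ h₁ hbb
  · field_simp
    linear_combination S.α (k + 1) ^ 2 * bb_mul_norm_sq_eq hbb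
  · field_simp
    linear_combination S.α (k + 1) ^ 2 * bb_sq_mul_norm_sq_sub_inner_le hβ hlam.le (by linarith) hbb

theorem norm_x_succ_sub (k : ℕ) : ‖S.x (k + 1) - S.x k‖ = S.α k * ‖S.f' (S.x k)‖ := by
  rw [x_succ_sub, norm_neg, norm_smul, Real.norm_of_nonneg (S.alpha_pos k).le]

theorem upsilon_succ_succ_le (xs : EuclideanSpace ℝ (Fin n)) (k : ℕ) :
    S.Upsilon xs (k + 1 + 1) ≤ S.Upsilon xs (k + 1) - 2 * S.w k * (S.f (S.x k) - S.f xs) := by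
  set g₀ := S.f' (S.x k)
  set g₁ := S.f' (S.x (k + 1))
  have hgap : S.f (S.x (k + 1)) - S.f xs ≤ ⟪g₁, S.x (k + 1) - xs⟫ :=
    S.hconv.sub_le_inner_of_hasGradientAt (S.hgrad _) xs
  have hdesc : S.f (S.x (k + 1)) - S.f (S.x k) ≤ -(S.α k * ⟪g₁, g₀⟫) := by
    have h := S.hconv.sub_le_inner_of_hasGradientAt (S.hgrad (S.x (k + 1))) (S.x k)
    rwa [x_succ_sub, inner_neg_right, real_inner_smul_right] at h
  have hdist : ‖S.x (k + 1 + 1) - xs‖ ^ 2 = ‖S.x (k + 1) - xs‖ ^ 2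
      - 2 * S.α (k + 1) * ⟪g₁, S.x (k + 1) - xs⟫ + S.α (k + 1) ^ 2 * ‖g₁‖ ^ 2 := by
    rw [S.x_succ (k + 1), sub_right_comm, norm_sub_sq_real, real_inner_smul_right, norm_smul,
      mul_pow, Real.norm_eq_abs, sq_abs, real_inner_comm]
    ring
  have hM : 2 * S.M (k + 1 + 1) ≤ 1 := by linarith [S.M_succ_le_half (k + 1)]
  have hstar := S.sq_alpha_succ_mul_norm_sq_le k
  have hα := S.alpha_pos (k + 1)
  have hP := S.P_succ_nonneg k
  simp only [Upsilon, w, Nat.add_sub_cancel, hdist, norm_x_succ_sub, mul_pow]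
  linarith [mul_le_mul_of_nonneg_left hgap hα.le, mul_le_mul_of_nonneg_left hdesc hP,
    mul_le_mul_of_nonneg_right hM (by positivity : 0 ≤ S.α (k + 1) ^ 2 * ‖g₁‖ ^ 2)]

end AdaBB

/-- Lemma 3.4: monotonicity of the Lyapunov function `Υ_k` along the general AdaBB iteration:
for all `k ≥ 1`, `Υ_{k+1} ≤ Υ_k - 2·w_{k-1}·(f(x^{k-1}) - f_*) ≤ Υ_k`. -/
theorem adabb_lyapunov_monotone (n : ℕ) (S : AdaBB n)
    (xs : EuclideanSpace ℝ (Fin n)) (hxs : ∀ y, S.f xs ≤ S.f y) :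
    ∀ k, 1 ≤ k →
      S.Upsilon xs (k + 1) ≤
        S.Upsilon xs k - 2 * S.w (k - 1) * (S.f (S.x (k - 1)) - S.f xs) ∧
      S.Upsilon xs k - 2 * S.w (k - 1) * (S.f (S.x (k - 1)) - S.f xs) ≤ S.Upsilon xs k := by
  intro k hk
  obtain ⟨j, rfl⟩ : ∃ j, k = j + 1 := ⟨k - 1, by omega⟩
  have hgap : 0 ≤ S.f (S.x j) - S.f xs := sub_nonneg.2 (hxs _)
  have hdecrease := mul_nonneg (mul_nonneg zero_le_two (S.w_nonneg j)) hgap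
  simp only [Nat.add_sub_cancel]
  exact ⟨S.upsilon_succ_succ_le xs j, by linarith⟩
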